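/- arXiv:1210.7931 — 5 statements merged into one kernel-verified Lean document; each statement's English description precedes it below -/
import Mathlib

section
/- If (N,e) is a polyquantoid, then (N,ê), where ê(I) = e(I) + Σ_{i∈I} e({i}), is a tight selfdual polymatroid. -/
/-!
Since `e` is complementary, `e univ = e ∅ = 0`, so submodularity of `e` against the complement of
`J \ I` gives `e I ≤ e J + e (J \ I)` for `I ⊆ J`. Bounding `e (J \ I)` by the sum of `e` over its
singletons shows that adding the modular part `∑ i ∈ I, e {i}` makes `hatFn e` nondecreasing.
Tightness and selfduality come from `e I = e Iᶜ` together with `hatFn e {i} = 2 * e {i}`.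
-/

open Finset

noncomputable def hatFn {N : Type*} [DecidableEq N] (e : Finset N → ℝ) (I : Finset N) : ℝ :=
  e I + ∑ i ∈ I, e {i}

noncomputable def checkFn {N : Type*} [DecidableEq N] (h : Finset N → ℝ) (I : Finset N) : ℝ :=
  h I - (1/2) * ∑ i ∈ I, h {i}

section SetFunction

variable {N : Type*} [DecidableEq N] {e : Finset N → ℝ}

theorem le_sum_singleton_of_submodular (hnorm : e ∅ = 0)
    (hsub : ∀ I J : Finset N, e (I ∪ J) + e (I ∩ J) ≤ e I + e J) (K : Finset N) :
    e K ≤ ∑ k ∈ K, e {k} := by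
  induction K using Finset.induction_on with
  | empty => simp [hnorm]
  | insert a K ha ih =>
    have hsplit := hsub {a} K
    rw [singleton_inter_of_notMem ha, hnorm, ← insert_eq] at hsplit
    rw [sum_insert ha]
    linarith

theorem hatFn_empty (hnorm : e ∅ = 0) : hatFn e ∅ = 0 := by
  simp [hatFn, hnorm]

theorem hatFn_singleton (i : N) : hatFn e {i} = 2 * e {i} := by
  rw [hatFn, sum_singleton, two_mul]

theorem hatFn_submodular (hsub : ∀ I J : Finset N, e (I ∪ J) + e (I ∩ J) ≤ e I + e J)
    (I J : Finset N) : hatFn e (I ∪ J) + hatFn e (I ∩ J) ≤ hatFn e I + hatFn e J := by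
  have hmodular : ∑ i ∈ I ∪ J, e {i} + ∑ i ∈ I ∩ J, e {i} = ∑ i ∈ I, e {i} + ∑ i ∈ J, e {i} :=
    sum_union_inter
  simp only [hatFn]
  linarith [hsub I J]

end SetFunction

section Polyquantoid

variable {N : Type*} [Fintype N] [DecidableEq N] {e : Finset N → ℝ}

theorem univ_eq_zero_of_compl (hnorm : e ∅ = 0) (hcompl : ∀ I : Finset N, e I = e Iᶜ) :
    e univ = 0 := by
  simpa [hnorm] using (hcompl ∅).symm

theorem le_add_sdiff_of_subset (hnorm : e ∅ = 0) (hcompl : ∀ I : Finset N, e I = e Iᶜ)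
    (hsub : ∀ I J : Finset N, e (I ∪ J) + e (I ∩ J) ≤ e I + e J) {I J : Finset N} (hIJ : I ⊆ J) :
    e I ≤ e J + e (J \ I) := by
  have hunion : J ∪ (J \ I)ᶜ = univ := by
    ext x
    by_cases hx : x ∈ J <;> simp [hx]
  have hinter : J ∩ (J \ I)ᶜ = I := by
    rw [← sdiff_eq_inter_compl, Finset.sdiff_sdiff_eq_self hIJ]
  have h := hsub J (J \ I)ᶜ
  rw [hunion, hinter, univ_eq_zero_of_compl hnorm hcompl, ← hcompl] at h
  linarith

theorem hatFn_mono (hnorm : e ∅ = 0) (hcompl : ∀ I : Finset N, e I = e Iᶜ)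
    (hsub : ∀ I J : Finset N, e (I ∪ J) + e (I ∩ J) ≤ e I + e J) {I J : Finset N} (hIJ : I ⊆ J) :
    hatFn e I ≤ hatFn e J := by
  have hsplit : ∑ i ∈ J \ I, e {i} + ∑ i ∈ I, e {i} = ∑ i ∈ J, e {i} := sum_sdiff hIJ
  simp only [hatFn]
  linarith [le_add_sdiff_of_subset hnorm hcompl hsub hIJ,
    le_sum_singleton_of_submodular hnorm hsub (J \ I)]

theorem hatFn_compl_singleton (hnorm : e ∅ = 0) (hcompl : ∀ I : Finset N, e I = e Iᶜ) (i : N) :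
    hatFn e {i}ᶜ = hatFn e univ := by
  have hsplit : ∑ j ∈ ({i}ᶜ : Finset N), e {j} + ∑ j ∈ {i}, e {j} = ∑ j, e {j} :=
    sum_compl_add_sum _ _
  simp only [hatFn, univ_eq_zero_of_compl hnorm hcompl, ← hcompl, sum_singleton] at hsplit ⊢
  linarith

theorem hatFn_eq_dual (hnorm : e ∅ = 0) (hcompl : ∀ I : Finset N, e I = e Iᶜ) (I : Finset N) :
    hatFn e I = hatFn e Iᶜ - hatFn e univ + ∑ i ∈ I, hatFn e {i} := by
  have hsplit : ∑ j ∈ Iᶜ, e {j} + ∑ j ∈ I, e {j} = ∑ j, e {j} := sum_compl_add_sum _ _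
  simp only [hatFn_singleton, ← mul_sum]
  simp only [hatFn, univ_eq_zero_of_compl hnorm hcompl, ← hcompl I]
  linarith

end Polyquantoid

theorem polyquantoid_to_polymatroid {N : Type*} [Fintype N] [DecidableEq N] (e : Finset N → ℝ)
    (hnorm : e ∅ = 0)
    (hcompl : ∀ I : Finset N, e I = e Iᶜ)
    (hsub : ∀ I J : Finset N, e (I ∪ J) + e (I ∩ J) ≤ e I + e J) :
    hatFn e ∅ = 0 ∧
    (∀ I J : Finset N, I ⊆ J → hatFn e I ≤ hatFn e J) ∧
    (∀ I J : Finset N, hatFn e (I ∪ J) + hatFn e (I ∩ J) ≤ hatFn e I + hatFn e J) ∧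
    (∀ i : N, hatFn e {i}ᶜ = hatFn e Finset.univ) ∧
    (∀ I : Finset N, hatFn e I = hatFn e Iᶜ - hatFn e Finset.univ + ∑ i ∈ I, hatFn e {i}) :=
  ⟨hatFn_empty hnorm, fun _ _ => hatFn_mono hnorm hcompl hsub, hatFn_submodular hsub,
    hatFn_compl_singleton hnorm hcompl, hatFn_eq_dual hnorm hcompl⟩
end

section
/- If (N,h) is a tight selfdual polymatroid, then (N,ȟ), where ȟ(I) = h(I) − (1/2)Σ_{i∈I} h({i}), is a polyquantoid. -/
/-!
Subtracting half the modular function `I ↦ ∑ i ∈ I, h {i}` preserves submodularity and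
normalization. Selfduality at `I = N` gives `∑ i ∈ N, h {i} = 2 h(N)`, and with this the
selfduality identity for `I` is exactly `ȟ(I) = ȟ(N ∖ I)`.
-/

open Finset

section
variable {N : Type*} [DecidableEq N] (h : Finset N → ℝ)

theorem checkFn_empty : checkFn h ∅ = h ∅ := by
  simp [checkFn]

variable {h} in
theorem checkFn_union_add_inter_le {I J : Finset N}
    (hsub : h (I ∪ J) + h (I ∩ J) ≤ h I + h J) :
    checkFn h (I ∪ J) + checkFn h (I ∩ J) ≤ checkFn h I + checkFn h J := by
  have hmodular : ∑ i ∈ I ∪ J, h {i} + ∑ i ∈ I ∩ J, h {i} = ∑ i ∈ I, h {i} + ∑ i ∈ J, h {i} :=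
    sum_union_inter
  unfold checkFn
  linarith

variable [Fintype N] {h}

theorem sum_singleton_eq_two_mul_univ (hnorm : h ∅ = 0)
    (hself : ∀ I : Finset N, h I = h Iᶜ - h univ + ∑ i ∈ I, h {i}) :
    ∑ i, h {i} = 2 * h univ := by
  have := hself univ
  rw [compl_univ, hnorm] at this
  linarith

theorem checkFn_compl (hnorm : h ∅ = 0)
    (hself : ∀ I : Finset N, h I = h Iᶜ - h univ + ∑ i ∈ I, h {i}) (I : Finset N) :
    checkFn h Iᶜ = checkFn h I := by
  have hsplit : ∑ i ∈ I, h {i} + ∑ i ∈ Iᶜ, h {i} = 2 * h univ :=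
    (sum_add_sum_compl I _).trans (sum_singleton_eq_two_mul_univ hnorm hself)
  have := hself I
  unfold checkFn
  linarith

end

theorem polymatroid_to_polyquantoid_general {N : Type*} [Fintype N] [DecidableEq N] (h : Finset N → ℝ)
    (hnorm : h ∅ = 0)
    (hsub : ∀ I J : Finset N, h (I ∪ J) + h (I ∩ J) ≤ h I + h J)
    (hself : ∀ I : Finset N, h I = h Iᶜ - h Finset.univ + ∑ i ∈ I, h {i}) :
    checkFn h ∅ = 0 ∧
    (∀ I : Finset N, checkFn h I = checkFn h Iᶜ) ∧
    (∀ I J : Finset N, checkFn h (I ∪ J) + checkFn h (I ∩ J) ≤ checkFn h I + checkFn h J) :=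
  ⟨(checkFn_empty h).trans hnorm, fun I => (checkFn_compl hnorm hself I).symm,
    fun I J => checkFn_union_add_inter_le (hsub I J)⟩

theorem polymatroid_to_polyquantoid {N : Type*} [Fintype N] [DecidableEq N] (h : Finset N → ℝ)
    (hnorm : h ∅ = 0)
    (hmono : ∀ I J : Finset N, I ⊆ J → h I ≤ h J)
    (hsub : ∀ I J : Finset N, h (I ∪ J) + h (I ∩ J) ≤ h I + h J)
    (htight : ∀ i : N, h {i}ᶜ = h Finset.univ)
    (hself : ∀ I : Finset N, h I = h Iᶜ - h Finset.univ + ∑ i ∈ I, h {i}) :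
    checkFn h ∅ = 0 ∧
    (∀ I : Finset N, checkFn h I = checkFn h Iᶜ) ∧
    (∀ I J : Finset N, checkFn h (I ∪ J) + checkFn h (I ∩ J) ≤ checkFn h I + checkFn h J) :=
  polymatroid_to_polyquantoid_general h hnorm hsub hself
end

section
/- If a polymatroid (N,h) has an ideal element, then there exist a matroid rank function r on N and a real t > 0 such that h = t·r. -/
open Finset

/-!
Write `t = h {n}`. Once every marginal value `h (insert c A) - h A` is known to be `0` or `t`,
`h / t` is integer valued and is the required matroid rank function. The dichotomy is proved by
induction on `A`. Suppose `c, n ∉ A` and the marginal value `d` of `c` lies strictly between `0`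
and `t`; by induction every element `v` of `K = insert c A` then has `h K - h (K.erase v) = d`.
Starting from an essential witness of an element of `K`, choose `Q` minimal with `K ∪ Q`
authorized, then `R ⊆ K` minimal with `Q ∪ R` authorized, and `w ∈ R`. By minimality of `Q`,
`h K + t * #Q ≤ h (K ∪ Q)`. If `K.erase w ∪ Q` is unauthorized, adding `w` authorizes it,
which forces `d = t`. Otherwise `w` can be exchanged with `n` over it (an element completing an
unauthorized `W` to an authorized set is interchangeable with `n` over every superset of `W`), so
`h (K ∪ Q) = h (K.erase w ∪ Q) ≤ h (K.erase w) + t * #Q` and `d = 0`.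
-/

section

variable {N : Type*} [DecidableEq N]

structure IsPolymatroid (h : Finset N → ℝ) : Prop where
  map_empty : h ∅ = 0
  mono : Monotone h
  submod : ∀ I J : Finset N, h (I ∪ J) + h (I ∩ J) ≤ h I + h J

def IsPerfect (h : Finset N → ℝ) (n : N) : Prop :=
  ∀ I : Finset N, n ∉ I → h (insert n I) - h I = h {n} ∨ h (insert n I) - h I = 0

structure IsIdealElement (h : Finset N → ℝ) (n : N) : Prop where
  perfect : IsPerfect h n
  essential : ∀ i ≠ n, ∃ I : Finset N, n ∉ I ∧ i ∈ I ∧ h (insert n I) = h I ∧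
    h (insert n (I.erase i)) - h (I.erase i) = h {n}
  singleton_eq : ∀ i, h {i} = h {n}

variable {h : Finset N → ℝ}

namespace IsPolymatroid

theorem nonneg (hP : IsPolymatroid h) (A : Finset N) : 0 ≤ h A :=
  hP.map_empty ▸ hP.mono (empty_subset A)

theorem insert_le_add_singleton (hP : IsPolymatroid h) (c : N) (A : Finset N) :
    h (insert c A) ≤ h A + h {c} := by
  have := hP.submod A {c}
  rw [union_singleton] at this
  linarith [hP.nonneg (A ∩ {c})]

theorem insert_sub_le_of_subset (hP : IsPolymatroid h) {A B : Finset N} {c : N} (hAB : A ⊆ B)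
    (hcB : c ∉ B) : h (insert c B) - h B ≤ h (insert c A) - h A := by
  have := hP.submod (insert c A) B
  rw [insert_union, union_eq_right.mpr hAB, insert_inter_of_notMem hcB,
    inter_eq_left.mpr hAB] at this
  linarith

theorem union_le_add_mul_card (hP : IsPolymatroid h) {t : ℝ} (B Q : Finset N)
    (hQ : ∀ e ∈ Q, h {e} ≤ t) : h (B ∪ Q) ≤ h B + t * #Q := by
  induction Q using Finset.induction_on with
  | empty => simp
  | insert e Q heQ ih =>
    rw [union_insert, card_insert_of_notMem heQ]
    have := hP.insert_le_add_singleton e (B ∪ Q)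
    have := ih fun x hx => hQ x (mem_insert_of_mem hx)
    have := hQ e (mem_insert_self e Q)
    push_cast
    linarith

theorem add_mul_card_le_union (hP : IsPolymatroid h) {t : ℝ} {B Q : Finset N}
    (hBQ : Disjoint B Q) (hQ : ∀ e ∈ Q, t ≤ h (B ∪ Q) - h (B ∪ Q.erase e)) :
    h B + t * #Q ≤ h (B ∪ Q) := by
  suffices ∀ T ⊆ Q, h B + t * #T ≤ h (B ∪ T) from this Q subset_rfl
  intro T
  induction T using Finset.induction_on with
  | empty => simp
  | insert e T heT ih =>
    intro hTQ
    have heQ : e ∈ Q := hTQ (mem_insert_self e T)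
    have hTQe : T ⊆ Q.erase e := subset_erase.mpr ⟨(subset_insert e T).trans hTQ, heT⟩
    have heBQ : e ∉ B ∪ Q.erase e := by
      simp [disjoint_right.mp hBQ heQ]
    have hmarg := hP.insert_sub_le_of_subset (union_subset_union_right hTQe) heBQ
    rw [← union_insert, insert_erase heQ] at hmarg
    rw [union_insert, card_insert_of_notMem heT]
    have := ih ((subset_insert e T).trans hTQ)
    have := hQ e heQ
    push_cast
    linarith

theorem authorized_mono (hP : IsPolymatroid h) {n : N} {A B : Finset N} (hAB : A ⊆ B)
    (hnB : n ∉ B) (hA : h (insert n A) = h A) : h (insert n B) = h B := by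
  have := hP.insert_sub_le_of_subset hAB hnB
  have := hP.mono (subset_insert n B)
  linarith

theorem insert_eq_add_of_authorized_insert (hP : IsPolymatroid h) {n b : N} {W : Finset N}
    (hb : h {b} ≤ h {n}) (hW : h (insert n W) - h W = h {n})
    (hWb : h (insert n (insert b W)) = h (insert b W)) : h (insert b W) = h W + h {n} := by
  have := hP.insert_le_add_singleton b W
  have := hP.mono (insert_subset_insert n (subset_insert b W))
  linarith

theorem insert_eq_insert_of_authorized_insert (hP : IsPolymatroid h) {n w : N}
    {W T : Finset N} (hw : h {w} ≤ h {n}) (hwn : w ≠ n) (hW : h (insert n W) - h W = h {n})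
    (hWw : h (insert n (insert w W)) = h (insert w W)) (hWT : W ⊆ T) (hnT : n ∉ T)
    (hwT : w ∉ T) : h (insert w T) = h (insert n T) := by
  have hjump := hP.insert_eq_add_of_authorized_insert hw hW hWw
  have hwT_auth : h (insert n (insert w T)) = h (insert w T) :=
    hP.authorized_mono (insert_subset_insert w hWT) (by simp [hwn.symm, hnT]) hWw
  have := hP.submod (insert n T) (insert n (insert w W))
  rw [← insert_union_distrib, union_insert, union_eq_left.mpr hWT, ← insert_inter_distrib,
    inter_insert_of_notMem hwT, inter_eq_right.mpr hWT] at this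
  have := hP.mono (insert_subset_insert n (subset_insert w T))
  linarith

theorem forall_sub_erase_eq_of_mem_Ioo (hP : IsPolymatroid h) {A : Finset N} {c : N} {t : ℝ}
    (hcA : c ∉ A) (hd : h (insert c A) - h A ∈ Set.Ioo 0 t)
    (hA : ∀ z ∈ A, ∀ x ∉ A.erase z, h (insert x (A.erase z)) - h (A.erase z) = t ∨
      h (insert x (A.erase z)) - h (A.erase z) = 0) :
    ∀ v ∈ insert c A, h (insert c A) - h ((insert c A).erase v) = h (insert c A) - h A := by
  intro v hv
  rcases mem_insert.mp hv with rfl | hvA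
  · rw [erase_insert hcA]
  rw [erase_insert_of_ne (ne_of_mem_of_not_mem hvA hcA).symm]
  have hc : h (insert c (A.erase v)) - h (A.erase v) = t :=
    (hA v hvA c fun hc => hcA (mem_of_mem_erase hc)).resolve_right fun h0 => by
      have := hP.insert_sub_le_of_subset (erase_subset v A) hcA
      linarith [hd.1]
  have hv : h A - h (A.erase v) = t := by
    have := hA v hvA v (notMem_erase v A)
    rw [insert_erase hvA] at this
    refine this.resolve_right fun h0 => ?_
    have := hP.mono (insert_subset_insert c (erase_subset v A))
    linarith [hd.2]
  linarith

end IsPolymatroid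

theorem IsPerfect.exists_minimal_authorized {n : N} (hn : IsPerfect h n) {B A : Finset N}
    (hnB : n ∉ B) (hnA : n ∉ A) (hBA : h (insert n (B ∪ A)) = h (B ∪ A)) :
    ∃ Q ⊆ A, h (insert n (B ∪ Q)) = h (B ∪ Q) ∧
      ∀ e ∈ Q, h (insert n (B ∪ Q.erase e)) - h (B ∪ Q.erase e) = h {n} := by
  obtain ⟨Q, hQA, hmin⟩ := exists_minimal_le_of_wellFoundedLT
    (fun Q => Q ⊆ A ∧ h (insert n (B ∪ Q)) = h (B ∪ Q)) A ⟨subset_rfl, hBA⟩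
  refine ⟨Q, hQA, hmin.prop.2, fun e he => (hn _ ?_).resolve_right fun h0 =>
    hmin.not_prop_of_lt (erase_ssubset he) ⟨(erase_subset e Q).trans hQA, by linarith⟩⟩
  simp only [mem_union, not_or]
  exact ⟨hnB, fun hnQ => hnA (hQA (mem_of_mem_erase hnQ))⟩

theorem IsPerfect.insert_sub_eq_or_of_insert (hP : IsPolymatroid h) {n c : N} (hn : IsPerfect h n)
    (hc : h {c} ≤ h {n}) (hcn : c ≠ n) {Y : Finset N} (hnY : n ∉ Y)
    (hY : h (insert c Y) - h Y = h {n} ∨ h (insert c Y) - h Y = 0) :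
    h (insert c (insert n Y)) - h (insert n Y) = h {n} ∨
      h (insert c (insert n Y)) - h (insert n Y) = 0 := by
  have hncY : n ∉ insert c Y := by simp [hcn.symm, hnY]
  have hanti := hP.insert_sub_le_of_subset (subset_insert c Y) hncY
  have ht := hP.nonneg {n}
  rw [insert_comm]
  rcases hn Y hnY with haY | haY <;> rcases hn (insert c Y) hncY with hacY | hacY
  · rcases hY with hY | hY <;> [left; right] <;> linarith
  · have := hP.insert_eq_add_of_authorized_insert hc haY (sub_eq_zero.mp hacY)
    right
    linarith
  · rcases hY with hY | hY <;> [left; right] <;> linarith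
  · rcases hY with hY | hY <;> [left; right] <;> linarith

theorem IsPerfect.eq_or_eq_zero_of_authorized_union (hP : IsPolymatroid h) {n : N}
    (hn : IsPerfect h n) (hle : ∀ i, h {i} ≤ h {n}) (ht : 0 < h {n}) {K Q : Finset N} {d : ℝ}
    (hnK : n ∉ K) (hnQ : n ∉ Q) (hd : ∀ v ∈ K, h K - h (K.erase v) = d)
    (hQ : h (insert n Q) - h Q = h {n}) (hKQ : h (insert n (K ∪ Q)) = h (K ∪ Q))
    (hQmin : ∀ e ∈ Q, h (insert n (K ∪ Q.erase e)) - h (K ∪ Q.erase e) = h {n}) :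
    d = h {n} ∨ d = 0 := by
  have hinsQ : ∀ e ∈ Q, insert e (K ∪ Q.erase e) = K ∪ Q := fun e he => by
    rw [← union_insert, insert_erase he]
  have hdisj : Disjoint K Q := disjoint_right.mpr fun e heQ heK => by
    have := hQmin e heQ
    rw [← insert_eq_of_mem (mem_union_left _ heK), hinsQ e heQ] at this
    linarith
  have hlow : h K + h {n} * #Q ≤ h (K ∪ Q) := hP.add_mul_card_le_union hdisj fun e he => by
    have := hP.insert_eq_add_of_authorized_insert (hle e) (hQmin e he) (by rwa [hinsQ e he])
    rw [hinsQ e he] at this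
    linarith
  obtain ⟨R, hRK, hQR, hRmin⟩ := hn.exists_minimal_authorized hnQ hnK (by rwa [union_comm])
  obtain ⟨w, hwR⟩ : R.Nonempty := nonempty_iff_ne_empty.mpr fun hR => by
    rw [hR, union_empty] at hQR
    linarith
  have hwK := hRK hwR
  set T := K.erase w ∪ Q with hT
  have hnT : n ∉ T := by simp [T, hnK, hnQ]
  have hwT : w ∉ T := by simp [T, disjoint_left.mp hdisj hwK]
  have hinsT : insert w T = K ∪ Q := by rw [hT, ← insert_union, insert_erase hwK]
  have hdw := hd w hwK
  rcases hn T hnT with hTu | hTa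
  · left
    have hjump := hP.insert_eq_add_of_authorized_insert (hle w) hTu (by rwa [hinsT])
    have hanti := hP.insert_sub_le_of_subset (subset_union_left : K.erase w ⊆ T) hwT
    have hup := hP.insert_le_add_singleton w (K.erase w)
    rw [hinsT] at hjump hanti
    rw [insert_erase hwK] at hanti hup
    linarith [hle w]
  · right
    have hRT : Q ∪ R.erase w ⊆ T := union_subset subset_union_right
      (subset_union_left.trans' (erase_subset_erase w hRK))
    have hpar := hP.insert_eq_insert_of_authorized_insert (hle w) (ne_of_mem_of_not_mem hwK hnK)
      (hRmin w hwR) (by rwa [← union_insert, insert_erase hwR]) hRT hnT hwT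
    have hup := hP.union_le_add_mul_card (K.erase w) Q fun e _ => hle e
    have := hP.mono (erase_subset w K)
    rw [hinsT] at hpar
    linarith

theorem IsIdealElement.eq_or_eq_zero_of_forall_sub_erase (hP : IsPolymatroid h) {n : N}
    (hI : IsIdealElement h n) (ht : 0 < h {n}) {K : Finset N} {d : ℝ} (hnK : n ∉ K)
    (hK : K.Nonempty) (hd : ∀ v ∈ K, h K - h (K.erase v) = d) : d = h {n} ∨ d = 0 := by
  have hle i := (hI.singleton_eq i).le
  obtain ⟨c, hcK⟩ := hK
  obtain ⟨I, hnI, hcI, hIa, hIu⟩ := hI.essential c (ne_of_mem_of_not_mem hcK hnK)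
  have hnIc : n ∉ I.erase c := fun hn => hnI (mem_of_mem_erase hn)
  have hIK : I ⊆ K ∪ I.erase c := (insert_erase hcI).symm.subset.trans
    (insert_subset (mem_union_left _ hcK) subset_union_right)
  obtain ⟨Q, hQI, hKQ, hQmin⟩ := hI.perfect.exists_minimal_authorized hnK hnIc
    (hP.authorized_mono hIK (by simp [hnK, hnIc]) hIa)
  have hnQ : n ∉ Q := fun hn => hnIc (hQI hn)
  have hQ := (hI.perfect Q hnQ).resolve_right fun h0 => by
    have := hP.authorized_mono hQI hnIc (by linarith)
    linarith
  exact hI.perfect.eq_or_eq_zero_of_authorized_union hP hle ht hnK hnQ hd hQ hKQ hQmin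

theorem IsIdealElement.insert_sub_eq_or (hP : IsPolymatroid h) {n : N} (hI : IsIdealElement h n)
    (ht : 0 < h {n}) (A : Finset N) {c : N} (hcA : c ∉ A) :
    h (insert c A) - h A = h {n} ∨ h (insert c A) - h A = 0 := by
  induction A using Finset.strongInduction generalizing c with
  | H A ih =>
  by_cases hcn : c = n
  · subst hcn
    exact hI.perfect A hcA
  have hc := (hI.singleton_eq c).le
  by_cases hnA : n ∈ A
  · rw [← insert_erase hnA]
    exact hI.perfect.insert_sub_eq_or_of_insert hP hc hcn (notMem_erase n A)
      (ih _ (erase_ssubset hnA) fun hcA' => hcA (mem_of_mem_erase hcA'))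
  by_contra! hne
  have hd : h (insert c A) - h A ∈ Set.Ioo 0 (h {n}) := by
    have := hP.mono (subset_insert c A)
    have := hP.insert_le_add_singleton c A
    constructor
    · exact lt_of_le_of_ne (by linarith) hne.2.symm
    · exact lt_of_le_of_ne (by linarith) hne.1
  have := hI.eq_or_eq_zero_of_forall_sub_erase hP ht (by simp [Ne.symm hcn, hnA])
    (insert_nonempty c A) (hP.forall_sub_erase_eq_of_mem_Ioo hcA hd
      fun z hz x hx => ih _ (erase_ssubset hz) hx)
  tauto

theorem IsIdealElement.exists_nat_mul (hP : IsPolymatroid h) {n : N} (hI : IsIdealElement h n)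
    (ht : 0 < h {n}) (X : Finset N) : ∃ m : ℕ, h X = h {n} * m := by
  induction X using Finset.induction_on with
  | empty => exact ⟨0, by simp [hP.map_empty]⟩
  | insert c X hcX ih =>
    obtain ⟨m, hm⟩ := ih
    rcases hI.insert_sub_eq_or hP ht X hcX with h1 | h0
    · exact ⟨m + 1, by push_cast; linarith⟩
    · exact ⟨m, by linarith⟩

end

theorem ideal_implies_matroid {N : Type*} [Fintype N] [DecidableEq N] (h : Finset N → ℝ)
    (hnorm : h ∅ = 0)
    (hmono : ∀ I J : Finset N, I ⊆ J → h I ≤ h J)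
    (hsub : ∀ I J : Finset N, h (I ∪ J) + h (I ∩ J) ≤ h I + h J)
    (n : N)
    (hperf : ∀ I ⊆ ({n}ᶜ : Finset N),
      h (insert n I) - h I = h {n} ∨ h (insert n I) - h I = 0)
    (hess : ∀ i ∈ ({n}ᶜ : Finset N), ∃ I ⊆ ({n}ᶜ : Finset N), i ∈ I ∧
      h (insert n I) = h I ∧ h (insert n (I \ {i})) - h (I \ {i}) = h {n})
    (hval : ∀ i ∈ ({n}ᶜ : Finset N), h {i} = h {n}) :
    ∃ (r : Finset N → ℝ) (t : ℝ), 0 < t ∧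
      r ∅ = 0 ∧
      (∀ I J : Finset N, I ⊆ J → r I ≤ r J) ∧
      (∀ I J : Finset N, r (I ∪ J) + r (I ∩ J) ≤ r I + r J) ∧
      (∀ I : Finset N, ∃ m : ℕ, r I = m) ∧
      (∀ i : N, r {i} = 0 ∨ r {i} = 1) ∧
      (∀ I : Finset N, h I = t * r I) := by
  have hP : IsPolymatroid h := ⟨hnorm, fun I J hIJ => hmono I J hIJ, hsub⟩
  have hsing (i : N) : h {i} = h {n} := by
    by_cases hi : i = n
    · rw [hi]
    · exact hval i (by simpa using hi)
  rcases (hP.nonneg {n}).eq_or_lt with ht | ht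
  · have hzero (I : Finset N) : h I = 0 := le_antisymm
      (by simpa [hnorm] using
        hP.union_le_add_mul_card ∅ I fun i _ => ((hsing i).trans ht.symm).le)
      (hP.nonneg I)
    exact ⟨0, 1, one_pos, rfl, fun _ _ _ => le_rfl, fun _ _ => le_rfl, fun _ => ⟨0, by simp⟩,
      fun _ => Or.inl rfl, fun I => by simp [hzero I]⟩
  have hI : IsIdealElement h n :=
    { perfect := fun I hnI => hperf I (subset_compl_singleton.mpr hnI)
      essential := fun i hi => by
        obtain ⟨I, hIn, hiI, hIa, hIu⟩ := hess i (by simpa using hi)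
        rw [sdiff_singleton_eq_erase] at hIu
        exact ⟨I, subset_compl_singleton.mp hIn, hiI, hIa, hIu⟩
      singleton_eq := hsing }
  refine ⟨fun I => h I / h {n}, h {n}, ht, by simp [hnorm], fun I J hIJ => ?_, fun I J => ?_,
    fun I => ?_, fun i => Or.inr (by simp [hsing i, ht.ne']),
    fun I => (mul_div_cancel₀ _ ht.ne').symm⟩
  · exact div_le_div_of_nonneg_right (hmono I J hIJ) ht.le
  · simp only [← add_div]
    exact div_le_div_of_nonneg_right (hsub I J) ht.le
  · obtain ⟨m, hm⟩ := hI.exists_nat_mul hP ht I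
    exact ⟨m, by simp [hm, ht.ne']⟩
end

section
/- An element n of a polyquantoid (N,e) is perfect if and only if n is perfect in the associated polymatroid (N,ê), where ê(I) = e(I) + Σ_{i∈I} e({i}); moreover I ⊆ N∖{n} is authorized for n in (N,e) if and only if it is authorized in (N,ê). -/
/-! Adding `n` to `I ∌ n` changes `ê` by exactly `e {n}` more than it changes `e`, and
`ê {n} = 2 e {n}`; so the two admissible increments `± e {n}` of `e` become the increments
`ê {n}` and `0` of `ê`. -/

open Finset

lemma hatFn_singleton_s17 {N : Type*} [DecidableEq N] (e : Finset N → ℝ) (n : N) :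
    hatFn e {n} = e {n} + e {n} := by
  simp [hatFn]

lemma hatFn_insert_sub {N : Type*} [DecidableEq N] (e : Finset N → ℝ) {n : N} {I : Finset N}
    (hn : n ∉ I) :
    hatFn e (insert n I) - hatFn e I = e (insert n I) - e I + e {n} := by
  rw [hatFn, hatFn, sum_insert hn]
  ring

theorem perfect_iff_hat_general {N : Type*} [Fintype N] [DecidableEq N] (e : Finset N → ℝ)
    (n : N) :
    ((∀ I ⊆ ({n}ᶜ : Finset N),
        e (insert n I) - e I = e {n} ∨ e (insert n I) - e I = -e {n}) ↔
      (∀ I ⊆ ({n}ᶜ : Finset N),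
        hatFn e (insert n I) - hatFn e I = hatFn e {n} ∨
          hatFn e (insert n I) - hatFn e I = 0)) ∧
    (∀ I ⊆ ({n}ᶜ : Finset N),
      e (insert n I) - e I = -e {n} ↔ hatFn e (insert n I) = hatFn e I) := by
  have hdiff : ∀ I ⊆ ({n}ᶜ : Finset N),
      hatFn e (insert n I) - hatFn e I = e (insert n I) - e I + e {n} :=
    fun I hI => hatFn_insert_sub e (subset_compl_singleton.mp hI)
  refine ⟨forall₂_congr fun I hI => ?_, fun I hI => ?_⟩
  · rw [hdiff I hI, hatFn_singleton_s17]
    exact or_congr (add_left_inj _).symm eq_neg_iff_add_eq_zero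
  · rw [← sub_eq_zero (a := hatFn e _), hdiff I hI, eq_neg_iff_add_eq_zero]

theorem perfect_iff_hat {N : Type*} [Fintype N] [DecidableEq N] (e : Finset N → ℝ)
    (hnorm : e ∅ = 0)
    (hcompl : ∀ I : Finset N, e I = e Iᶜ)
    (hsub : ∀ I J : Finset N, e (I ∪ J) + e (I ∩ J) ≤ e I + e J)
    (n : N) :
    ((∀ I ⊆ ({n}ᶜ : Finset N),
        e (insert n I) - e I = e {n} ∨ e (insert n I) - e I = -e {n}) ↔
      (∀ I ⊆ ({n}ᶜ : Finset N),
        hatFn e (insert n I) - hatFn e I = hatFn e {n} ∨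
          hatFn e (insert n I) - hatFn e I = 0)) ∧
    (∀ I ⊆ ({n}ᶜ : Finset N),
      e (insert n I) - e I = -e {n} ↔ hatFn e (insert n I) = hatFn e I) :=
  perfect_iff_hat_general e n
end

section
/- If an integer polymatroid (N,h) is tight and selfdual, then its free expansion (φ(N), h_φ) is tight and selfdual, where φ assigns pairwise disjoint sets φ(i) with |φ(i)| = h({i}) and h_φ(K) = min_{J⊆N} [h(J) + |K ∖ φ(J)|] for K ⊆ φ(N). -/
/-
Selfduality of `h` pairs the term of `J` in the minimum defining `h_φ(K)` with the term of `Jᶜ`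
in the minimum defining `h_φ(φ(N) ∖ K)`; counting gives `h_φ(K) ≤ h_φ(φ(N) ∖ K) - h(N) + |K|`.
The two instances of this inequality (for `K` and for `φ(N) ∖ K`) add up to
`0 ≤ |φ(N)| - 2 h(N)`, which is `0` by selfduality of `h` at `N`, so both are equalities.
Together with `h_φ(∅) = 0`, hence `h_φ(φ(N)) = h(N)`, and `h_φ({k}) = 1`, this is the
selfduality of `h_φ`, and selfduality at a singleton is tightness.
-/

open Finset

/-- The free expansion `h_φ` of an integer set function `h`. -/
def expandP {N M : Type*} [Fintype N] [DecidableEq N] [DecidableEq M]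
    (h : Finset N → ℤ) (φ : N → Finset M) (K : Finset M) : ℤ :=
  (Finset.univ : Finset N).powerset.inf' (Finset.powerset_nonempty _)
    (fun J => h J + ((K \ J.biUnion φ).card : ℤ))

theorem Finset.card_sdiff_sdiff_add_card_sdiff {M : Type*} [DecidableEq M] {K E : Finset M}
    (A : Finset M) (hK : K ⊆ E) :
    #(K \ (E \ A)) + #(E \ A) = #((E \ K) \ A) + #K := by
  have e1 : K \ (E \ A) = K ∩ A := by grind
  have e2 : (E \ A) \ K = (E \ K) \ A := by grind
  have e3 : E \ A ∩ K = K \ A := by grind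
  have h1 := card_inter_add_card_sdiff K A
  have h2 := card_sdiff_add_card_inter (E \ A) K
  rw [e1, ← e2]; rw [e3] at h2; omega

theorem card_biUnion_eq_sum {N M : Type*} [DecidableEq M] {h : Finset N → ℤ} {φ : N → Finset M}
    (hcard : ∀ i : N, (#(φ i) : ℤ) = h {i})
    (hdisj : ∀ i j : N, i ≠ j → Disjoint (φ i) (φ j)) (S : Finset N) :
    (#(S.biUnion φ) : ℤ) = ∑ i ∈ S, h {i} := by
  rw [card_biUnion fun i _ j _ hij => hdisj i j hij]
  push_cast
  exact sum_congr rfl fun i _ => hcard i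

theorem tight_of_selfdual {M : Type*} [DecidableEq M] (g : Finset M → ℤ) (E : Finset M)
    (hg : ∀ K ⊆ E, g K = g (E \ K) - g E + ∑ k ∈ K, g {k}) :
    ∀ k ∈ E, g (E \ {k}) = g E := by
  intro k hk
  have := hg {k} (singleton_subset_iff.2 hk)
  rw [sum_singleton] at this
  linarith

section FreeExpansion

variable {N M : Type*} [Fintype N] [DecidableEq N] [DecidableEq M]
  {h : Finset N → ℤ} {φ : N → Finset M}

theorem expandP_le (K : Finset M) (J : Finset N) :
    expandP h φ K ≤ h J + #(K \ J.biUnion φ) :=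
  inf'_le _ (mem_powerset.2 (subset_univ J))

theorem le_expandP {K : Finset M} {c : ℤ} (H : ∀ J : Finset N, c ≤ h J + #(K \ J.biUnion φ)) :
    c ≤ expandP h φ K :=
  le_inf' _ _ fun J _ => H J

theorem expandP_empty (hnorm : h ∅ = 0) (hmono : ∀ I J : Finset N, I ⊆ J → h I ≤ h J) :
    expandP h φ ∅ = 0 := by
  refine le_antisymm (by simpa [hnorm] using expandP_le (h := h) (φ := φ) ∅ ∅) ?_
  exact le_expandP fun J => by
    have := hmono ∅ J (empty_subset J)
    rw [hnorm] at this
    positivity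

theorem expandP_singleton (hnorm : h ∅ = 0) (hmono : ∀ I J : Finset N, I ⊆ J → h I ≤ h J)
    (hcard : ∀ i : N, (#(φ i) : ℤ) ≤ h {i}) (k : M) :
    expandP h φ {k} = 1 := by
  refine le_antisymm (by simpa [hnorm] using expandP_le (h := h) (φ := φ) {k} ∅) ?_
  refine le_expandP fun J => ?_
  by_cases hkJ : k ∈ J.biUnion φ
  · obtain ⟨i, hiJ, hki⟩ := mem_biUnion.1 hkJ
    have hφi : (1 : ℤ) ≤ #(φ i) := by exact_mod_cast card_pos.2 ⟨k, hki⟩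
    have := hmono {i} J (singleton_subset_iff.2 hiJ)
    have := hcard i
    omega
  · have := hmono ∅ J (empty_subset J)
    rw [sdiff_eq_self_of_disjoint (disjoint_singleton_left.2 hkJ)]
    simp only [card_singleton, Nat.cast_one]
    omega

theorem biUnion_compl_eq_sdiff (hdisj : ∀ i j : N, i ≠ j → Disjoint (φ i) (φ j))
    (J : Finset N) : Jᶜ.biUnion φ = univ.biUnion φ \ J.biUnion φ := by
  ext x
  simp only [mem_biUnion, mem_sdiff, mem_compl, mem_univ, true_and, not_exists, not_and]
  constructor
  · rintro ⟨i, hiJ, hxi⟩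
    refine ⟨⟨i, hxi⟩, fun j hjJ hxj => ?_⟩
    have hij : i ≠ j := by rintro rfl; exact hiJ hjJ
    exact disjoint_left.1 (hdisj i j hij) hxi hxj
  · rintro ⟨⟨i, hxi⟩, hx⟩
    exact ⟨i, fun hiJ => hx i hiJ hxi, hxi⟩

theorem expandP_le_expandP_sdiff
    (hself : ∀ I : Finset N, h I = h Iᶜ - h univ + ∑ i ∈ I, h {i})
    (hcard : ∀ i : N, (#(φ i) : ℤ) = h {i})
    (hdisj : ∀ i j : N, i ≠ j → Disjoint (φ i) (φ j))
    {K : Finset M} (hK : K ⊆ univ.biUnion φ) :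
    expandP h φ K ≤ expandP h φ (univ.biUnion φ \ K) - h univ + #K := by
  suffices H : expandP h φ K + h univ - #K ≤ expandP h φ (univ.biUnion φ \ K) by linarith
  refine le_expandP fun J => ?_
  have hJ := hself Jᶜ
  rw [compl_compl, ← card_biUnion_eq_sum hcard hdisj, biUnion_compl_eq_sdiff hdisj] at hJ
  have hJc := expandP_le (h := h) (φ := φ) K Jᶜ
  rw [biUnion_compl_eq_sdiff hdisj] at hJc
  have hcount := card_sdiff_sdiff_add_card_sdiff (J.biUnion φ) hK
  zify at hcount
  linarith

theorem expandP_eq_expandP_sdiff (hnorm : h ∅ = 0)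
    (hself : ∀ I : Finset N, h I = h Iᶜ - h univ + ∑ i ∈ I, h {i})
    (hcard : ∀ i : N, (#(φ i) : ℤ) = h {i})
    (hdisj : ∀ i j : N, i ≠ j → Disjoint (φ i) (φ j))
    {K : Finset M} (hK : K ⊆ univ.biUnion φ) :
    expandP h φ K = expandP h φ (univ.biUnion φ \ K) - h univ + #K := by
  have hE : (#(univ.biUnion φ) : ℤ) = 2 * h univ := by
    have := hself univ
    rw [compl_univ, hnorm] at this
    rw [card_biUnion_eq_sum hcard hdisj]
    linarith
  have h₁ := expandP_le_expandP_sdiff hself hcard hdisj hK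
  have h₂ := expandP_le_expandP_sdiff hself hcard hdisj
    (sdiff_subset (s := univ.biUnion φ) (t := K))
  rw [Finset.sdiff_sdiff_eq_self hK, card_sdiff_of_subset hK] at h₂
  push_cast [card_le_card hK] at h₂
  linarith

theorem expandP_univ (hnorm : h ∅ = 0) (hmono : ∀ I J : Finset N, I ⊆ J → h I ≤ h J)
    (hself : ∀ I : Finset N, h I = h Iᶜ - h univ + ∑ i ∈ I, h {i})
    (hcard : ∀ i : N, (#(φ i) : ℤ) = h {i})
    (hdisj : ∀ i j : N, i ≠ j → Disjoint (φ i) (φ j)) :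
    expandP h φ (univ.biUnion φ) = h univ := by
  have := expandP_eq_expandP_sdiff hnorm hself hcard hdisj (empty_subset (univ.biUnion φ))
  rw [expandP_empty hnorm hmono, sdiff_empty, card_empty, Nat.cast_zero] at this
  linarith

end FreeExpansion

theorem free_expansion_tight_selfdual_general {N M : Type*} [Fintype N] [DecidableEq N] [DecidableEq M]
    (h : Finset N → ℤ)
    (hnorm : h ∅ = 0)
    (hmono : ∀ I J : Finset N, I ⊆ J → h I ≤ h J)
    (hself : ∀ I : Finset N, h I = h Iᶜ - h Finset.univ + ∑ i ∈ I, h {i})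
    (φ : N → Finset M)
    (hcard : ∀ i : N, ((φ i).card : ℤ) = h {i})
    (hdisj : ∀ i j : N, i ≠ j → Disjoint (φ i) (φ j)) :
    (∀ k ∈ Finset.univ.biUnion φ,
      expandP h φ (Finset.univ.biUnion φ \ {k}) = expandP h φ (Finset.univ.biUnion φ)) ∧
    (∀ K ⊆ Finset.univ.biUnion φ,
      expandP h φ K = expandP h φ (Finset.univ.biUnion φ \ K)
        - expandP h φ (Finset.univ.biUnion φ) + ∑ k ∈ K, expandP h φ {k}) := by
  have hselfdual : ∀ K ⊆ univ.biUnion φ, expandP h φ K = expandP h φ (univ.biUnion φ \ K)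
      - expandP h φ (univ.biUnion φ) + ∑ k ∈ K, expandP h φ {k} := by
    intro K hK
    rw [expandP_univ hnorm hmono hself hcard hdisj,
      sum_congr rfl fun k _ => expandP_singleton hnorm hmono (fun i => (hcard i).le) k,
      sum_const, nsmul_one]
    exact expandP_eq_expandP_sdiff hnorm hself hcard hdisj hK
  exact ⟨tight_of_selfdual _ _ hselfdual, hselfdual⟩

theorem free_expansion_tight_selfdual {N M : Type*} [Fintype N] [DecidableEq N] [DecidableEq M]
    (h : Finset N → ℤ)
    (hnorm : h ∅ = 0)
    (hmono : ∀ I J : Finset N, I ⊆ J → h I ≤ h J)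
    (hsub : ∀ I J : Finset N, h (I ∪ J) + h (I ∩ J) ≤ h I + h J)
    (htight : ∀ i : N, h {i}ᶜ = h Finset.univ)
    (hself : ∀ I : Finset N, h I = h Iᶜ - h Finset.univ + ∑ i ∈ I, h {i})
    (φ : N → Finset M)
    (hcard : ∀ i : N, ((φ i).card : ℤ) = h {i})
    (hdisj : ∀ i j : N, i ≠ j → Disjoint (φ i) (φ j)) :
    (∀ k ∈ Finset.univ.biUnion φ,
      expandP h φ (Finset.univ.biUnion φ \ {k}) = expandP h φ (Finset.univ.biUnion φ)) ∧
    (∀ K ⊆ Finset.univ.biUnion φ,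
      expandP h φ K = expandP h φ (Finset.univ.biUnion φ \ K)
        - expandP h φ (Finset.univ.biUnion φ) + ∑ k ∈ K, expandP h φ {k}) :=
  free_expansion_tight_selfdual_general h hnorm hmono hself φ hcard hdisj
end
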